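/- arXiv:2004.10261 — 5 statements merged into one kernel-verified Lean document; each statement's English description precedes it below -/
import Mathlib

section
/- Let γ = (γ_1 ≥ γ_2 ≥ … ≥ γ_ℓ) be a partition of m ≥ 1 and let x, y be natural numbers. Then the hook product of γ⋆(x,y) factors as π(γ⋆(x,y)) = x! · y! · (h_{11}(γ) + x + y) · ∏_{j=2}^{γ_1} (h_{1j}(γ) + x) · ∏_{i=2}^{ℓ} (h_{i1}(γ) + y) · ∏_{(i,j)∈Y(γ), i≥2, j≥2} h_{ij}(γ). -/
/-- The hook length of the cell in (0-based) row `i` and column `j` of the Young diagram of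
the partition whose parts are given by the list `L`: with 1-based indices `(i+1, j+1)`,
this is `(λ_{i+1} - (j+1)) + (λ'_{j+1} - (i+1)) + 1`, where `λ'_{j+1}` is the number of
parts of size at least `j+1`. -/
def hook (L : List ℕ) (i j : ℕ) : ℕ :=
  (L.getD i 0 - (j + 1)) + (L.countP (fun a => decide (j + 1 ≤ a)) - (i + 1)) + 1

/-- The product `π(λ)` of all hook lengths of the partition `λ` given by the list `L`. -/
def hookProd (L : List ℕ) : ℕ :=
  ∏ i ∈ Finset.range L.length, ∏ j ∈ Finset.range (L.getD i 0), hook L i j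

/-- `γ ⋆ (x, y)`: add `x` to the first part of `γ` and append `y` trailing parts equal to `1`. -/
def starPartition (L : List ℕ) (x y : ℕ) : List ℕ :=
  (L.headD 0 + x) :: (L.tail ++ List.replicate y 1)

/-!
Write `γ = a :: t`. In `γ ⋆ (x, y)` the first row is longer by `x` and the first column by `y`,
so the arm of every cell of the first row of `γ` grows by `x`, the leg of every cell of the first
column by `y`, and the corner gains both; every other cell of `γ` keeps its hook. The `x` new
cells of the first row have hooks `x, x - 1, …, 1` because all other rows have length at most
`a`, and the `y` new cells of the first column have hooks `y, y - 1, …, 1`.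
-/

open Finset Nat

theorem prod_range_sub_eq_factorial (n : ℕ) : ∏ j ∈ range n, (n - j) = n ! := by
  rw [← descFactorial_eq_prod_range, descFactorial_self]

theorem List.countP_one_le_eq_length {t : List ℕ} (htp : ∀ b ∈ t, 1 ≤ b) :
    t.countP (fun b => decide (1 ≤ b)) = t.length :=
  List.countP_eq_length.mpr fun b hb => by simpa using htp b hb

theorem List.countP_le_eq_zero_of_lt {t : List ℕ} {a k : ℕ} (hta : ∀ b ∈ t, b ≤ a)
    (hk : a < k) : t.countP (fun b => decide (k ≤ b)) = 0 :=
  List.countP_eq_zero.mpr fun b hb => by simpa using (hta b hb).trans_lt hk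

section StarPartition

variable (a : ℕ) (t : List ℕ) (x y : ℕ)

theorem starPartition_cons :
    starPartition (a :: t) x y = (a + x) :: (t ++ List.replicate y 1) := rfl

theorem length_starPartition_cons :
    (starPartition (a :: t) x y).length = t.length + 1 + y := by
  simp only [starPartition_cons, List.length_cons, List.length_append, List.length_replicate]
  omega

theorem getD_starPartition_zero : (starPartition (a :: t) x y).getD 0 0 = a + x := rfl

theorem getD_starPartition_succ {i : ℕ} (hi : i < t.length) :
    (starPartition (a :: t) x y).getD (i + 1) 0 = t.getD i 0 := by
  rw [starPartition_cons, List.getD_cons_succ, List.getD_append _ _ _ _ hi]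

theorem getD_starPartition_leg {i : ℕ} (hi : i < y) :
    (starPartition (a :: t) x y).getD (t.length + 1 + i) 0 = 1 := by
  rw [starPartition_cons, show t.length + 1 + i = t.length + i + 1 by omega,
    List.getD_cons_succ, List.getD_append_right _ _ _ _ (by omega), Nat.add_sub_cancel_left,
    List.getD_replicate _ hi]

theorem countP_starPartition_cons (k : ℕ) :
    (starPartition (a :: t) x y).countP (fun b => decide (k ≤ b)) =
      (if k ≤ a + x then 1 else 0) + t.countP (fun b => decide (k ≤ b)) +
        if k ≤ 1 then y else 0 := by
  simp only [starPartition_cons, List.countP_cons, List.countP_append, List.countP_replicate,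
    decide_eq_true_eq]
  split_ifs <;> omega

variable {a t}

theorem hook_starPartition_zero_zero (ha : 1 ≤ a) (htp : ∀ b ∈ t, 1 ≤ b) :
    hook (starPartition (a :: t) x y) 0 0 = hook (a :: t) 0 0 + x + y := by
  simp only [hook, Nat.zero_add, countP_starPartition_cons, List.countP_cons,
    List.countP_one_le_eq_length htp, getD_starPartition_zero, List.getD_cons_zero,
    decide_eq_true_eq]
  split_ifs <;> omega

theorem hook_starPartition_zero_succ {j : ℕ} (hj : j + 2 ≤ a) :
    hook (starPartition (a :: t) x y) 0 (j + 1) = hook (a :: t) 0 (j + 1) + x := by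
  simp only [hook, Nat.zero_add, countP_starPartition_cons, List.countP_cons,
    getD_starPartition_zero, List.getD_cons_zero, decide_eq_true_eq]
  split_ifs <;> omega

theorem hook_starPartition_arm (ha : 1 ≤ a) (hta : ∀ b ∈ t, b ≤ a) {j : ℕ} (hj : j < x) :
    hook (starPartition (a :: t) x y) 0 (a + j) = x - j := by
  simp only [hook, Nat.zero_add, countP_starPartition_cons, getD_starPartition_zero,
    List.countP_le_eq_zero_of_lt hta (by omega : a < a + j + 1)]
  split_ifs <;> omega

theorem hook_starPartition_succ_zero (ha : 1 ≤ a) (htp : ∀ b ∈ t, 1 ≤ b) {i : ℕ}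
    (hi : i < t.length) :
    hook (starPartition (a :: t) x y) (i + 1) 0 = hook (a :: t) (i + 1) 0 + y := by
  simp only [hook, Nat.zero_add, getD_starPartition_succ _ _ _ _ hi, countP_starPartition_cons,
    List.countP_cons, List.countP_one_le_eq_length htp, List.getD_cons_succ, decide_eq_true_eq]
  split_ifs <;> omega

theorem hook_starPartition_succ_succ (hta : ∀ b ∈ t, b ≤ a) {i j : ℕ} (hi : i < t.length)
    (hj : j + 2 ≤ t.getD i 0) :
    hook (starPartition (a :: t) x y) (i + 1) (j + 1) = hook (a :: t) (i + 1) (j + 1) := by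
  have : t.getD i 0 ≤ a := by rw [List.getD_eq_getElem _ _ hi]; exact hta _ (List.getElem_mem hi)
  simp only [hook, getD_starPartition_succ _ _ _ _ hi, countP_starPartition_cons,
    List.countP_cons, List.getD_cons_succ, decide_eq_true_eq]
  split_ifs <;> omega

theorem hook_starPartition_leg (ha : 1 ≤ a) (htp : ∀ b ∈ t, 1 ≤ b) {i : ℕ} (hi : i < y) :
    hook (starPartition (a :: t) x y) (t.length + 1 + i) 0 = y - i := by
  simp only [hook, Nat.zero_add, getD_starPartition_leg _ _ _ _ hi, countP_starPartition_cons,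
    List.countP_one_le_eq_length htp]
  split_ifs <;> omega

theorem prod_hook_starPartition_row_zero (ha : 1 ≤ a) (hta : ∀ b ∈ t, b ≤ a)
    (htp : ∀ b ∈ t, 1 ≤ b) :
    ∏ j ∈ range (a + x), hook (starPartition (a :: t) x y) 0 j =
      (hook (a :: t) 0 0 + x + y) * (∏ j ∈ range (a - 1), (hook (a :: t) 0 (j + 1) + x)) *
        x ! := by
  obtain ⟨c, rfl⟩ : ∃ c, a = c + 1 := ⟨a - 1, by omega⟩
  have hrow : ∀ j ∈ range c, hook (starPartition ((c + 1) :: t) x y) 0 (j + 1) =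
      hook ((c + 1) :: t) 0 (j + 1) + x := fun j hj =>
    hook_starPartition_zero_succ x y (by rw [mem_range] at hj; omega)
  have harm : ∀ j ∈ range x, hook (starPartition ((c + 1) :: t) x y) 0 (c + 1 + j) = x - j :=
    fun j hj => hook_starPartition_arm x y ha hta (mem_range.mp hj)
  rw [prod_range_add, prod_range_succ', prod_congr rfl hrow, prod_congr rfl harm,
    prod_range_sub_eq_factorial, hook_starPartition_zero_zero x y ha htp, Nat.add_sub_cancel]
  ring

theorem prod_hook_starPartition_row_succ (ha : 1 ≤ a) (hta : ∀ b ∈ t, b ≤ a)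
    (htp : ∀ b ∈ t, 1 ≤ b) {i : ℕ} (hi : i < t.length) :
    ∏ j ∈ range ((starPartition (a :: t) x y).getD (i + 1) 0),
        hook (starPartition (a :: t) x y) (i + 1) j =
      (hook (a :: t) (i + 1) 0 + y) *
        ∏ j ∈ range (t.getD i 0 - 1), hook (a :: t) (i + 1) (j + 1) := by
  obtain ⟨c, hc⟩ : ∃ c, t.getD i 0 = c + 1 := by
    refine ⟨t.getD i 0 - 1, ?_⟩
    have := htp _ (List.getElem_mem hi)
    rw [List.getD_eq_getElem _ _ hi]
    omega
  have hrow : ∀ j ∈ range c, hook (starPartition (a :: t) x y) (i + 1) (j + 1) =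
      hook (a :: t) (i + 1) (j + 1) := fun j hj =>
    hook_starPartition_succ_succ x y hta hi (by rw [hc]; rw [mem_range] at hj; omega)
  rw [getD_starPartition_succ _ _ _ _ hi, hc, Nat.add_sub_cancel, prod_range_succ',
    prod_congr rfl hrow, hook_starPartition_succ_zero x y ha htp hi, mul_comm]

theorem prod_hook_starPartition_leg (ha : 1 ≤ a) (htp : ∀ b ∈ t, 1 ≤ b) :
    ∏ i ∈ range y, ∏ j ∈ range ((starPartition (a :: t) x y).getD (t.length + 1 + i) 0),
        hook (starPartition (a :: t) x y) (t.length + 1 + i) j = y ! := by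
  rw [← prod_range_sub_eq_factorial]
  refine prod_congr rfl fun i hi => ?_
  rw [getD_starPartition_leg _ _ _ _ (mem_range.mp hi), prod_range_one,
    hook_starPartition_leg x y ha htp (mem_range.mp hi)]

end StarPartition

/-- For a partition `γ` of `m ≥ 1` and natural numbers `x, y`, the hook
product of `γ ⋆ (x, y)` factors as
`π(γ⋆(x,y)) = x! ⬝ y! ⬝ (h_{11}(γ)+x+y) ⬝ ∏_{j=2}^{γ₁} (h_{1j}(γ)+x) ⬝ ∏_{i=2}^{ℓ} (h_{i1}(γ)+y)
⬝ ∏_{i,j ≥ 2} h_{ij}(γ)`. -/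
theorem stmt0 (m : ℕ) (hm : 1 ≤ m) (γ : List ℕ)
    (hsort : γ.Pairwise (· ≥ ·)) (hpos : ∀ c ∈ γ, 0 < c) (hsum : γ.sum = m)
    (x y : ℕ) :
    hookProd (starPartition γ x y) =
      Nat.factorial x * Nat.factorial y * (hook γ 0 0 + x + y) *
        (∏ j ∈ Finset.range (γ.headD 0 - 1), (hook γ 0 (j + 1) + x)) *
        (∏ i ∈ Finset.range (γ.length - 1), (hook γ (i + 1) 0 + y)) *
        (∏ i ∈ Finset.range (γ.length - 1),
          ∏ j ∈ Finset.range (γ.getD (i + 1) 0 - 1), hook γ (i + 1) (j + 1)) := by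
  obtain ⟨a, t, rfl⟩ : ∃ a t, γ = a :: t :=
    List.exists_cons_of_ne_nil (by rintro rfl; simp at hsum; omega)
  have ha : 1 ≤ a := hpos a List.mem_cons_self
  have hta : ∀ b ∈ t, b ≤ a := (List.pairwise_cons.mp hsort).1
  have htp : ∀ b ∈ t, 1 ≤ b := fun b hb => hpos b (List.mem_cons_of_mem _ hb)
  rw [hookProd, length_starPartition_cons, prod_range_add, prod_range_succ',
    prod_hook_starPartition_leg x y ha htp, getD_starPartition_zero,
    prod_hook_starPartition_row_zero x y ha hta htp,
    prod_congr rfl fun i hi => prod_hook_starPartition_row_succ x y ha hta htp (mem_range.mp hi),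
    prod_mul_distrib]
  simp only [List.headD_cons, List.length_cons, List.getD_cons_succ, Nat.add_sub_cancel]
  ring
end

section
/- Let p be a prime, let u, v be natural numbers with u ≥ v + 1, and let h_2 > h_3 > … > h_ℓ be integers (possibly an empty list) with p > h_2 and h_ℓ ≥ 1. Then ∏_{i=1}^{p} (up + i) · ∏_{j=2}^{ℓ} (h_j + vp) > ∏_{i=1}^{p} (vp + i) · ∏_{j=2}^{ℓ} (h_j + (v+1)p). -/
/-!
Each factor `(h + v p) / (h + (v+1) p)` of the second product is paired with the factor
`(u p + h) / (v p + h)` of the first: since `u ≥ v + 1`, the pair is at least `1`. The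
`h` are distinct and lie below `p`, so the factor `(u p + p) / (v p + p) > 1` at `i = p`
remains unpaired and makes the inequality strict.
-/

theorem add_mul_add_le_of_le (a b c h : ℕ) (hbc : b ≤ c) :
    (a + h) * (h + b) ≤ (c + h) * (h + a) :=
  calc (a + h) * (h + b) = (b + h) * (h + a) := by ring
    _ ≤ (c + h) * (h + a) := by gcongr

theorem prod_add_mul_prod_add_lt {T S : Finset ℕ} (hST : S ⊆ T) (hT : ∀ i ∈ T, 0 < i)
    (hunpaired : (T \ S).Nonempty) {a b c : ℕ} (hbc : b ≤ c) (hac : a < c) :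
    (∏ i ∈ T, (a + i)) * ∏ h ∈ S, (h + b) < (∏ i ∈ T, (c + i)) * ∏ h ∈ S, (h + a) := by
  rw [← Finset.prod_sdiff hST, ← Finset.prod_sdiff hST, mul_assoc, mul_assoc,
    ← Finset.prod_mul_distrib, ← Finset.prod_mul_distrib]
  have hpos : ∀ i ∈ T, 0 < a + i := fun i hi => Nat.add_pos_right a (hT i hi)
  have hunpaired_lt : ∏ i ∈ T \ S, (a + i) < ∏ i ∈ T \ S, (c + i) :=
    Finset.prod_lt_prod_of_nonempty (fun i hi => hpos i (Finset.sdiff_subset hi))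
      (fun i _ => by omega) hunpaired
  have hpaired_le : ∏ h ∈ S, (a + h) * (h + b) ≤ ∏ h ∈ S, (c + h) * (h + a) :=
    Finset.prod_le_prod' fun h _ => add_mul_add_le_of_le a b c h hbc
  have hpaired_pos : 0 < ∏ h ∈ S, (c + h) * (h + a) :=
    Finset.prod_pos fun h hh => by have := hT h (hST hh); positivity
  exact Nat.mul_lt_mul_of_lt_of_le hunpaired_lt hpaired_le hpaired_pos

/-- Let `p` be a prime, `u ≥ v + 1` natural numbers, and
`h₂ > h₃ > ⋯ > h_ℓ` a (possibly empty) strictly decreasing list of integers with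
`p > h₂` and `h_ℓ ≥ 1`. Then
`∏_{i=1}^{p} (up + i) ⬝ ∏_{j=2}^{ℓ} (h_j + vp) > ∏_{i=1}^{p} (vp + i) ⬝ ∏_{j=2}^{ℓ} (h_j + (v+1)p)`. -/
theorem stmt3 (p : ℕ) (hp : p.Prime) (u v : ℕ) (huv : v + 1 ≤ u)
    (H : List ℕ) (hsort : H.Pairwise (· > ·)) (hH : ∀ h ∈ H, 1 ≤ h ∧ h < p) :
    (∏ i ∈ Finset.Icc 1 p, (u * p + i)) * (H.map (fun h => h + v * p)).prod >
      (∏ i ∈ Finset.Icc 1 p, (v * p + i)) * (H.map (fun h => h + (v + 1) * p)).prod := by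
  have hnodup : H.Nodup := hsort.nodup
  rw [← List.prod_toFinset _ hnodup, ← List.prod_toFinset _ hnodup]
  have hsub : H.toFinset ⊆ Finset.Icc 1 p := fun h hh => by
    have := hH h (List.mem_toFinset.mp hh)
    exact Finset.mem_Icc.mpr ⟨this.1, this.2.le⟩
  have hp_unpaired : p ∈ Finset.Icc 1 p \ H.toFinset :=
    Finset.mem_sdiff.mpr ⟨Finset.mem_Icc.mpr ⟨hp.one_le, le_rfl⟩,
      fun hmem => (hH p (List.mem_toFinset.mp hmem)).2.false⟩
  exact prod_add_mul_prod_add_lt hsub (fun i hi => (Finset.mem_Icc.mp hi).1)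
    ⟨p, hp_unpaired⟩ (Nat.mul_le_mul_right p huv) (Nat.mul_lt_mul_of_pos_right huv hp.pos)
end

section
/- Let p be a prime and let n have p-adic expansion n = Σ_{i=0}^{k} a_i p^i with 0 ≤ a_i ≤ p−1 and a_0 ≥ 1. Let γ be a partition of a_0, let x = Σ_{i=1}^{k} b_i p^i with 0 ≤ b_i ≤ a_i for all i ≥ 1, and set y = n − a_0 − x and λ = γ⋆(x, y), a partition of n. Then ν_p(π(λ)) = ν_p(n!); equivalently, by the hook length formula, the irreducible character χ^λ of the symmetric group S_n has degree n!/π(λ) coprime to p. -/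
/-!
The cells of `λ = γ⋆(x, y)` fall into three blocks: the `x` cells appended to the first row have
hook lengths `x, x - 1, …, 1`, the `y` appended rows have hook lengths `y, …, 1`, and a cell
`(i, j)` of `γ` has hook length `h_{ij}(γ) + [i = 1] x + [j = 1] y`. Both `x` and `y` are
multiples of `p`, while `1 ≤ h_{ij}(γ) ≤ a₀ < p`, so `ν_p(π(λ)) = ν_p(x!) + ν_p(y!)`. On the other
side `n = a₀ + x + y`, and the base-`p` digits of `x` and `y` add without carries, so by
Legendre's formula `ν_p(n!) = ν_p((x + y)!) = ν_p(x!) + ν_p(y!)`.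
-/

open Finset
open scoped Nat

namespace List

theorem getD_le_headD {γ : List ℕ} (hsort : γ.Pairwise (· ≥ ·)) (i : ℕ) :
    γ.getD i 0 ≤ γ.headD 0 := by
  rcases γ with _ | ⟨g, t⟩
  · simp
  rcases i with _ | i
  · simp
  rw [getD_cons_succ, headD_cons, getD_eq_getElem?_getD]
  rcases h : t[i]? with _ | c
  · simp
  · exact (pairwise_cons.mp hsort).1 c (mem_of_getElem? h)

theorem headD_pos {γ : List ℕ} (hγ : γ ≠ []) (hpos : ∀ c ∈ γ, 0 < c) : 0 < γ.headD 0 := by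
  obtain ⟨g, t, rfl⟩ := exists_cons_of_ne_nil hγ
  exact hpos g mem_cons_self

end List

theorem hook_le_sum {γ : List ℕ} (hsort : γ.Pairwise (· ≥ ·)) (hpos : ∀ c ∈ γ, 0 < c)
    {i j : ℕ} (hj : j < γ.getD i 0) : hook γ i j ≤ γ.sum := by
  have hrow := List.getD_le_headD hsort i
  have hcol : γ.countP (fun a => decide (j + 1 ≤ a)) ≤ γ.length := List.countP_le_length
  rcases γ with _ | ⟨g, t⟩
  · simp at hj
  have ht := t.length_le_sum_of_one_le fun c hc => hpos c (List.mem_cons_of_mem g hc)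
  simp only [List.headD_cons, List.length_cons, List.sum_cons] at hrow hcol ⊢
  unfold hook
  omega

section StarPartition

variable {γ : List ℕ} {x y : ℕ}

theorem length_starPartition (hγ : γ ≠ []) :
    (starPartition γ x y).length = γ.length + y := by
  obtain ⟨g, t, rfl⟩ := List.exists_cons_of_ne_nil hγ
  simp only [starPartition, List.tail_cons, List.length_cons, List.length_append,
    List.length_replicate]
  omega

theorem getD_starPartition_of_lt {i : ℕ} (hi : i < γ.length) :
    (starPartition γ x y).getD i 0 = γ.getD i 0 + if i = 0 then x else 0 := by
  rcases γ with _ | ⟨g, t⟩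
  · simp at hi
  rcases i with _ | i
  · simp [starPartition]
  simp only [List.length_cons] at hi
  simp [starPartition, List.getD_eq_getElem?_getD,
    List.getElem?_append_left (by omega : i < t.length)]

theorem getD_starPartition_length_add (hγ : γ ≠ []) {d : ℕ} (hd : d < y) :
    (starPartition γ x y).getD (γ.length + d) 0 = 1 := by
  obtain ⟨g, t, rfl⟩ := List.exists_cons_of_ne_nil hγ
  rw [starPartition, List.tail_cons, List.length_cons, Nat.add_right_comm, List.getD_cons_succ,
    List.getD_eq_getElem?_getD, List.getElem?_append_right (by omega)]
  simp [hd]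

theorem countP_starPartition {j : ℕ} (hj : j < γ.headD 0) :
    (starPartition γ x y).countP (fun a => decide (j + 1 ≤ a)) =
      γ.countP (fun a => decide (j + 1 ≤ a)) + if j = 0 then y else 0 := by
  rcases γ with _ | ⟨g, t⟩
  · simp at hj
  simp only [List.headD_cons] at hj
  simp only [starPartition, List.headD_cons, List.tail_cons, List.countP_cons, List.countP_append,
    List.countP_replicate, decide_eq_true_eq]
  split_ifs <;> omega

theorem countP_starPartition_of_headD_le (hsort : γ.Pairwise (· ≥ ·)) {j : ℕ} (hj : 0 < j)
    (hγj : γ.headD 0 ≤ j) (hjx : j < γ.headD 0 + x) :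
    (starPartition γ x y).countP (fun a => decide (j + 1 ≤ a)) = 1 := by
  have htail : γ.tail.countP (fun a => decide (j + 1 ≤ a)) = 0 := by
    rcases γ with _ | ⟨g, t⟩
    · simp
    rw [List.countP_eq_zero]
    intro c hc
    have := (List.pairwise_cons.mp hsort).1 c hc
    simp only [List.headD_cons] at hγj
    simp only [decide_eq_true_eq]; omega
  simp only [starPartition, List.countP_cons, List.countP_append, htail, List.countP_replicate,
    decide_eq_true_eq]
  split_ifs <;> omega

theorem hook_starPartition_of_lt (hsort : γ.Pairwise (· ≥ ·)) (hpos : ∀ c ∈ γ, 0 < c) {i j : ℕ}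
    (hi : i < γ.length) (hj : j < γ.getD i 0) :
    hook (starPartition γ x y) i j =
      hook γ i j + (if i = 0 then x else 0) + (if j = 0 then y else 0) := by
  have hj' := hj.trans_le (List.getD_le_headD hsort i)
  unfold hook
  rw [getD_starPartition_of_lt hi, countP_starPartition hj']
  rcases Nat.eq_zero_or_pos j with rfl | hj0
  · have hcount : γ.countP (fun a => decide (0 + 1 ≤ a)) = γ.length :=
      List.countP_eq_length.mpr fun c hc => decide_eq_true (hpos c hc)
    rw [hcount]
    split_ifs <;> omega
  · simp only [if_neg hj0.ne']
    split_ifs <;> omega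

theorem hook_starPartition_zero_headD_add (hsort : γ.Pairwise (· ≥ ·)) (hpos : ∀ c ∈ γ, 0 < c)
    (hγ : γ ≠ []) {d : ℕ} (hd : d < x) :
    hook (starPartition γ x y) 0 (γ.headD 0 + d) = x - d := by
  have hg := List.headD_pos hγ hpos
  unfold hook
  rw [countP_starPartition_of_headD_le hsort (by omega) le_self_add (by omega)]
  rw [show (starPartition γ x y).getD 0 0 = γ.headD 0 + x from rfl]
  omega

theorem hook_starPartition_length_add (hpos : ∀ c ∈ γ, 0 < c) (hγ : γ ≠ []) {d : ℕ}
    (hd : d < y) : hook (starPartition γ x y) (γ.length + d) 0 = y - d := by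
  have hcount : γ.countP (fun a => decide (0 + 1 ≤ a)) = γ.length :=
    List.countP_eq_length.mpr fun c hc => decide_eq_true (hpos c hc)
  unfold hook
  rw [getD_starPartition_length_add hγ hd, countP_starPartition (List.headD_pos hγ hpos), hcount,
    if_pos rfl]
  omega

theorem hookProd_starPartition (hsort : γ.Pairwise (· ≥ ·)) (hpos : ∀ c ∈ γ, 0 < c)
    (hγ : γ ≠ []) :
    hookProd (starPartition γ x y) =
      (∏ i ∈ range γ.length, ∏ j ∈ range (γ.getD i 0),
        (hook γ i j + (if i = 0 then x else 0) + (if j = 0 then y else 0))) * x ! * y ! := by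
  have hrow : ∀ i ∈ range γ.length,
      ∏ j ∈ range ((starPartition γ x y).getD i 0), hook (starPartition γ x y) i j =
        (∏ j ∈ range (γ.getD i 0),
          (hook γ i j + (if i = 0 then x else 0) + (if j = 0 then y else 0))) *
        if i = 0 then x ! else 1 := by
    intro i hi
    rw [mem_range] at hi
    rw [getD_starPartition_of_lt hi, prod_range_add]
    congr 1
    · exact prod_congr rfl fun j hj => hook_starPartition_of_lt hsort hpos hi (mem_range.1 hj)
    · split_ifs with h0
      · subst h0
        have hhead : γ.getD 0 0 = γ.headD 0 := by cases γ <;> rfl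
        rw [← Nat.descFactorial_self, Nat.descFactorial_eq_prod_range, hhead]
        exact prod_congr rfl fun d hd =>
          hook_starPartition_zero_headD_add hsort hpos hγ (mem_range.1 hd)
      · exact prod_range_zero _
  have htrail : ∏ d ∈ range y, ∏ j ∈ range ((starPartition γ x y).getD (γ.length + d) 0),
      hook (starPartition γ x y) (γ.length + d) j = y ! := by
    rw [← Nat.descFactorial_self, Nat.descFactorial_eq_prod_range]
    refine prod_congr rfl fun d hd => ?_
    rw [getD_starPartition_length_add hγ (mem_range.1 hd), prod_range_one,
      hook_starPartition_length_add hpos hγ (mem_range.1 hd)]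
  have hlen : 0 < γ.length := List.length_pos_iff.mpr hγ
  rw [hookProd, length_starPartition hγ, prod_range_add, htrail, prod_congr rfl hrow,
    prod_mul_distrib, prod_ite_eq' _ 0, if_pos (mem_range.2 hlen)]

end StarPartition

theorem sum_range_succ_mul_pow {p : ℕ} (w : ℕ → ℕ) (K : ℕ) :
    ∑ i ∈ range (K + 1), w i * p ^ i = p * ∑ i ∈ range K, w (i + 1) * p ^ i + w 0 := by
  rw [sum_range_succ', mul_sum]
  simp only [pow_succ, pow_zero, mul_one]
  congr 1
  exact sum_congr rfl fun i _ => by ring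

theorem sum_range_succ_eq_add_sum_Icc {M : Type*} [AddCommMonoid M] (f : ℕ → M) (k : ℕ) :
    ∑ i ∈ range (k + 1), f i = f 0 + ∑ i ∈ Icc 1 k, f i := by
  rw [sum_range_eq_add_Ico _ k.succ_pos, ← Ico_add_one_right_eq_Icc]
  rfl

theorem sum_range_succ_update_zero_mul_pow (p k : ℕ) (c : ℕ → ℕ) :
    ∑ i ∈ range (k + 1), Function.update c 0 0 i * p ^ i = ∑ i ∈ Icc 1 k, c i * p ^ i := by
  rw [sum_range_succ_eq_add_sum_Icc, Function.update_self, zero_mul, zero_add]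
  exact sum_congr rfl fun i hi => by
    rw [Function.update_of_ne (by simp only [mem_Icc] at hi; omega)]

theorem dvd_sum_Icc_mul_pow (p k : ℕ) (c : ℕ → ℕ) : p ∣ ∑ i ∈ Icc 1 k, c i * p ^ i :=
  dvd_sum fun i hi => (dvd_pow_self p (by simp only [mem_Icc] at hi; omega)).mul_left _

theorem padicValNat_factorial_add_of_dvd_of_lt {p m r : ℕ} [Fact p.Prime] (hm : p ∣ m)
    (hr : r < p) : padicValNat p (m + r)! = padicValNat p m ! := by
  obtain ⟨m, rfl⟩ := hm
  exact padicValNat_factorial_mul_add m hr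

theorem padicValNat_factorial_add_of_digit_add_lt {p : ℕ} [Fact p.Prime] (K : ℕ) (u v : ℕ → ℕ)
    (huv : ∀ i < K, u i + v i < p) :
    padicValNat p (∑ i ∈ range K, u i * p ^ i + ∑ i ∈ range K, v i * p ^ i)! =
      padicValNat p (∑ i ∈ range K, u i * p ^ i)! +
        padicValNat p (∑ i ∈ range K, v i * p ^ i)! := by
  induction K generalizing u v with
  | zero => simp
  | succ K ih =>
    have h0 := huv 0 K.succ_pos
    rw [sum_range_succ_mul_pow u, sum_range_succ_mul_pow v,
      add_add_add_comm, ← mul_add, padicValNat_factorial_mul_add _ h0,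
      padicValNat_factorial_mul_add _ ((Nat.le_add_right _ _).trans_lt h0),
      padicValNat_factorial_mul_add _ ((Nat.le_add_left _ _).trans_lt h0),
      padicValNat_factorial_mul, padicValNat_factorial_mul, padicValNat_factorial_mul,
      ih _ _ fun i hi => huv (i + 1) (by omega)]
    ring

section Digits

variable {p k n x : ℕ} {a b : ℕ → ℕ}

theorem eq_add_add_sum_Icc_sub (hb : ∀ i, 1 ≤ i → i ≤ k → b i ≤ a i)
    (hn : n = ∑ i ∈ range (k + 1), a i * p ^ i) (hx : x = ∑ i ∈ Icc 1 k, b i * p ^ i) :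
    n = a 0 + x + ∑ i ∈ Icc 1 k, (a i - b i) * p ^ i := by
  rw [hn, sum_range_succ_eq_add_sum_Icc, hx, pow_zero, mul_one, add_assoc, ← sum_add_distrib]
  congr 1
  refine sum_congr rfl fun i hi => ?_
  simp only [mem_Icc] at hi
  rw [← add_mul, Nat.add_sub_cancel' (hb i hi.1 hi.2)]

theorem sub_sub_eq_sum_Icc_sub (hb : ∀ i, 1 ≤ i → i ≤ k → b i ≤ a i)
    (hn : n = ∑ i ∈ range (k + 1), a i * p ^ i) (hx : x = ∑ i ∈ Icc 1 k, b i * p ^ i) :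
    n - a 0 - x = ∑ i ∈ Icc 1 k, (a i - b i) * p ^ i := by
  have := eq_add_add_sum_Icc_sub hb hn hx
  omega

theorem padicValNat_factorial_eq_add_of_digits [Fact p.Prime] (ha : ∀ i, i ≤ k → a i ≤ p - 1)
    (hb : ∀ i, 1 ≤ i → i ≤ k → b i ≤ a i)
    (hn : n = ∑ i ∈ range (k + 1), a i * p ^ i) (hx : x = ∑ i ∈ Icc 1 k, b i * p ^ i) :
    padicValNat p n ! = padicValNat p x ! + padicValNat p (n - a 0 - x)! := by
  have hp := (Fact.out : p.Prime).pos
  have hn' := eq_add_add_sum_Icc_sub hb hn hx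
  have hy := sub_sub_eq_sum_Icc_sub hb hn hx
  have hcarry := padicValNat_factorial_add_of_digit_add_lt (k + 1) (Function.update b 0 0)
    (Function.update (fun i => a i - b i) 0 0) fun i hi => by
      rcases Nat.eq_zero_or_pos i with rfl | hi0
      · simpa using hp
      · simp only [Function.update_of_ne hi0.ne']
        have := ha i (by omega)
        have := hb i hi0 (by omega)
        omega
  simp only [sum_range_succ_update_zero_mul_pow, ← hx, ← hy] at hcarry
  have hxy : p ∣ x + (n - a 0 - x) := by
    rw [hy, hx]
    exact dvd_add (dvd_sum_Icc_mul_pow p k b) (dvd_sum_Icc_mul_pow p k _)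
  have ha0 : a 0 < p := by have := ha 0 k.zero_le; omega
  rw [← hcarry, ← padicValNat_factorial_add_of_dvd_of_lt hxy ha0]
  congr 2
  omega

end Digits

theorem not_dvd_prod_hook_add {p : ℕ} (hp : p.Prime) {γ : List ℕ}
    (hsort : γ.Pairwise (· ≥ ·)) (hpos : ∀ c ∈ γ, 0 < c) (hγp : γ.sum < p) {x y : ℕ}
    (hx : p ∣ x) (hy : p ∣ y) :
    ¬ p ∣ ∏ i ∈ range γ.length, ∏ j ∈ range (γ.getD i 0),
      (hook γ i j + (if i = 0 then x else 0) + (if j = 0 then y else 0)) := by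
  simp only [hp.prime.dvd_finsetProd_iff, mem_range, not_exists, not_and]
  intro i _ j hj
  have hxy : p ∣ (if i = 0 then x else 0) + (if j = 0 then y else 0) :=
    dvd_add (by split_ifs <;> simp [hx]) (by split_ifs <;> simp [hy])
  rw [add_assoc, Nat.dvd_add_left hxy]
  exact Nat.not_dvd_of_pos_of_lt (Nat.succ_pos _) ((hook_le_sum hsort hpos hj).trans_lt hγp)

/-- Let `p` be a prime and `n = Σ_{i=0}^{k} a_i p^i` its `p`-adic expansion
with `a₀ ≥ 1`. Let `γ` be a partition of `a₀`, let `x = Σ_{i=1}^{k} b_i p^i` with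
`0 ≤ b_i ≤ a_i` for `i ≥ 1`, and set `y = n - a₀ - x` and `λ = γ⋆(x, y)`.
Then `ν_p(π(λ)) = ν_p(n!)`, i.e. `χ^λ` has degree coprime to `p`. -/
theorem stmt4 (p k n : ℕ) (hp : p.Prime) (a : ℕ → ℕ)
    (ha : ∀ i, i ≤ k → a i ≤ p - 1) (ha0 : 1 ≤ a 0)
    (hn : n = ∑ i ∈ Finset.range (k + 1), a i * p ^ i)
    (γ : List ℕ) (hsort : γ.Pairwise (· ≥ ·)) (hpos : ∀ c ∈ γ, 0 < c) (hsum : γ.sum = a 0)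
    (b : ℕ → ℕ) (hb : ∀ i, 1 ≤ i → i ≤ k → b i ≤ a i)
    (x : ℕ) (hx : x = ∑ i ∈ Finset.Icc 1 k, b i * p ^ i) :
    padicValNat p (hookProd (starPartition γ x (n - a 0 - x))) =
      padicValNat p (Nat.factorial n) := by
  have : Fact p.Prime := ⟨hp⟩
  have hγ : γ ≠ [] := by rintro rfl; simp at hsum; omega
  have hγp : γ.sum < p := by have := ha 0 k.zero_le; omega
  have hpx : p ∣ x := hx ▸ dvd_sum_Icc_mul_pow p k b
  have hpy : p ∣ n - a 0 - x := sub_sub_eq_sum_Icc_sub hb hn hx ▸ dvd_sum_Icc_mul_pow p k _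
  obtain ⟨P, hP, hprod⟩ : ∃ P, ¬ p ∣ P ∧
      hookProd (starPartition γ x (n - a 0 - x)) = P * x ! * (n - a 0 - x)! :=
    ⟨_, not_dvd_prod_hook_add hp hsort hpos hγp hpx hpy, hookProd_starPartition hsort hpos hγ⟩
  have hP0 : P ≠ 0 := by rintro rfl; exact hP (dvd_zero p)
  rw [hprod, padicValNat.mul (by positivity) (by positivity), padicValNat.mul hP0 (by positivity),
    padicValNat.eq_zero_of_not_dvd hP, zero_add, padicValNat_factorial_eq_add_of_digits ha hb hn hx]
end

section
/- Let p be a prime and let n have p-adic expansion n = Σ_{i=0}^{k} a_i p^i with 0 ≤ a_i ≤ p−1, k ≥ 1, a_k ≠ 0 and a_0 ≥ 1. Let γ = (γ_1 ≥ … ≥ γ_ℓ) be a partition of a_0 and let x = Σ_{i=1}^{k} b_i p^i with 0 ≤ b_i ≤ a_i for all i and b_k ≥ ⌊a_k/2⌋ + 1. Then γ_1 + x > ℓ + (n − a_0 − x); that is, the partition λ = γ⋆(x, n − a_0 − x) has first part strictly larger than its number of parts (equivalently λ_1 > (λ')_1). -/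
theorem sum_range_mul_pow_lt_pow {p k : ℕ} {a : ℕ → ℕ} (ha : ∀ i < k, a i < p) :
    ∑ i ∈ Finset.range k, a i * p ^ i < p ^ k := by
  induction k with
  | zero => simp
  | succ k ih =>
    have hak : a k + 1 ≤ p := ha k k.lt_succ_self
    calc ∑ i ∈ Finset.range (k + 1), a i * p ^ i
        = ∑ i ∈ Finset.range k, a i * p ^ i + a k * p ^ k := Finset.sum_range_succ _ _
      _ < p ^ k + a k * p ^ k := by
        gcongr
        exact ih fun i hi => ha i (by omega)
      _ = (a k + 1) * p ^ k := by ring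
      _ ≤ p ^ (k + 1) := by rw [pow_succ']; gcongr

theorem stmt6_general (p k n : ℕ) (hp : p.Prime) (hk : 1 ≤ k) (a : ℕ → ℕ)
    (ha : ∀ i, i ≤ k → a i ≤ p - 1)
    (hn : n = ∑ i ∈ Finset.range (k + 1), a i * p ^ i)
    (γ : List ℕ) (hpos : ∀ c ∈ γ, 0 < c)
    (hsum : γ.sum = a 0)
    (b : ℕ → ℕ) (hbk : a k / 2 + 1 ≤ b k)
    (x : ℕ) (hx : x = ∑ i ∈ Finset.Icc 1 k, b i * p ^ i) :
    γ.length + (n - a 0 - x) < γ.headD 0 + x := by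
  have hp0 : 0 < p := hp.pos
  set D := ∑ i ∈ Finset.range k, a i * p ^ i
  have hD : D < p ^ k := sum_range_mul_pow_lt_pow fun i hi => by have := ha i hi.le; omega
  have hnD : n = D + a k * p ^ k := by rw [hn, Finset.sum_range_succ]
  have ha0D : a 0 ≤ D := by
    simpa using Finset.single_le_sum (f := fun i => a i * p ^ i) (fun _ _ => Nat.zero_le _)
      (Finset.mem_range.mpr hk)
  have hxk : b k * p ^ k ≤ x := hx ▸
    Finset.single_le_sum (f := fun i => b i * p ^ i) (fun _ _ => Nat.zero_le _)
      (Finset.mem_Icc.mpr ⟨hk, le_rfl⟩)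
  have hn2x : n < 2 * x := by
    have htop : (a k + 1) * p ^ k ≤ 2 * (b k * p ^ k) := by
      rw [← mul_assoc]; gcongr; omega
    rw [hnD]; linarith [add_one_mul (a k) (p ^ k)]
  -- needed when `n - a 0 - x` truncates to `0`
  have ha0x : a 0 < x :=
    calc a 0 < p ^ k := ha0D.trans_lt hD
      _ ≤ b k * p ^ k := Nat.le_mul_of_pos_left _ (by omega)
      _ ≤ x := hxk
  have hlen : γ.length ≤ a 0 := hsum ▸ γ.length_le_sum_of_one_le hpos
  omega

/-- With `n = Σ_{i=0}^{k} a_i p^i` the `p`-adic expansion (`k ≥ 1`,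
`a_k ≠ 0`, `a₀ ≥ 1`), `γ = (γ₁ ≥ ⋯ ≥ γ_ℓ)` a partition of `a₀`, and
`x = Σ_{i=1}^{k} b_i p^i` with `0 ≤ b_i ≤ a_i` for all `i` and `b_k ≥ ⌊a_k/2⌋ + 1`, one has
`γ₁ + x > ℓ + (n - a₀ - x)`: the partition `λ = γ⋆(x, n - a₀ - x)` has first part strictly
larger than its number of parts. -/
theorem stmt6 (p k n : ℕ) (hp : p.Prime) (hk : 1 ≤ k) (a : ℕ → ℕ)
    (ha : ∀ i, i ≤ k → a i ≤ p - 1) (hak : a k ≠ 0) (ha0 : 1 ≤ a 0)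
    (hn : n = ∑ i ∈ Finset.range (k + 1), a i * p ^ i)
    (γ : List ℕ) (hsort : γ.Pairwise (· ≥ ·)) (hpos : ∀ c ∈ γ, 0 < c)
    (hsum : γ.sum = a 0)
    (b : ℕ → ℕ) (hb : ∀ i, 1 ≤ i → i ≤ k → b i ≤ a i) (hbk : a k / 2 + 1 ≤ b k)
    (x : ℕ) (hx : x = ∑ i ∈ Finset.Icc 1 k, b i * p ^ i) :
    γ.length + (n - a 0 - x) < γ.headD 0 + x :=
  stmt6_general p k n hp hk a ha hn γ hpos hsum b hbk x hx
end

section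
/- Let G be a finite group, p a prime, and S_1, …, S_t nontrivial subgroups of G such that: (i) S_i ∩ S_j = 1 for all i ≠ j; (ii) every S_i normalizes every S_j (so that each S_i is contained in M := ⋂_{j=1}^{t} N_G(S_j) and is normal in M); (iii) for every g ∈ G and every i there exists j with g S_i g^{−1} = S_j; and (iv) p divides |S_i| for every i. Let Q be a Sylow p-subgroup of M. Then the centralizer C_G(Q) is contained in M. -/
/-!
Each `Sᵢ` is normal in `M` and has order divisible by `p`, so the Sylow subgroup `Q` of `M`
contains some `x ≠ 1` of `Sᵢ`. If `c` centralizes `Q`, then `x = c x c⁻¹` lies in `Sᵢ` and in its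
conjugate `c Sᵢ c⁻¹ = Sⱼ`; as distinct `Sⱼ` meet trivially, `j = i`, i.e. `c` normalizes `Sᵢ`.
-/

/-- The intersection `M = ⋂_j N_G(S_j)` of the normalizers of a family of subgroups. -/
def interNormalizer {G : Type*} [Group G] {t : ℕ} (S : Fin t → Subgroup G) : Subgroup G :=
  ⨅ j, Subgroup.normalizer (S j : Set G)

open Pointwise in
theorem Sylow.exists_ne_one_mem_of_normal {G : Type*} [Group G] [Finite G] {p : ℕ}
    [Fact p.Prime] (Q : Sylow p G) {N : Subgroup G} [N.Normal] (hdvd : p ∣ Nat.card N) :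
    ∃ x ∈ Q, x ∈ N ∧ x ≠ 1 := by
  obtain ⟨y, hy⟩ := exists_prime_orderOf_dvd_card' p hdvd
  have hy : orderOf (y : G) = p := (Subgroup.orderOf_coe y).trans hy
  have hpgroup : IsPGroup p (Subgroup.zpowers (y : G)) :=
    .of_card (n := 1) (by rw [Nat.card_zpowers, hy, pow_one])
  obtain ⟨R, hyR⟩ := hpgroup.exists_le_sylow
  obtain ⟨g, rfl⟩ := MulAction.exists_smul_eq G R Q
  refine ⟨MulAut.conj g y, ?_, ‹N.Normal›.conj_mem _ y.2 g, ?_⟩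
  · rw [Sylow.smul_def]
    exact Subgroup.smul_mem_pointwise_smul _ _ _ (hyR (Subgroup.mem_zpowers (y : G)))
  · rw [map_ne_one_iff _ (MulAut.conj g).injective, Ne, ← orderOf_eq_one_iff, hy]
    exact (Fact.out : p.Prime).ne_one

theorem Subgroup.mem_normalizer_of_commute_of_disjoint_conj {G ι : Type*} [Group G]
    {S : ι → Subgroup G} (hdisj : ∀ i j, i ≠ j → S i ⊓ S j = ⊥)
    (hperm : ∀ (g : G) (i : ι), ∃ j, (S i).map (MulAut.conj g).toMonoidHom = S j)
    {c x : G} {i : ι} (hx : x ∈ S i) (hx1 : x ≠ 1) (hcx : Commute c x) :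
    c ∈ normalizer (S i : Set G) := by
  obtain ⟨j, hj⟩ := hperm c i
  have hxj : x ∈ S j := by
    rw [← hj]
    exact ⟨x, hx, by simp [MulAut.conj_apply, hcx.eq]⟩
  obtain rfl : i = j := by
    by_contra hij
    exact hx1 (mem_bot.mp (hdisj i j hij ▸ mem_inf.mpr ⟨hx, hxj⟩))
  exact mem_normalizer_iff_map_conj_eq.mpr hj

theorem stmt9_general {G : Type*} [Group G] [Finite G] (p : ℕ) (hp : p.Prime)
    (t : ℕ) (S : Fin t → Subgroup G)
    (hdisj : ∀ i j, i ≠ j → S i ⊓ S j = ⊥)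
    (hnorm : ∀ i j, S i ≤ Subgroup.normalizer (S j : Set G))
    (hperm : ∀ (g : G) (i : Fin t), ∃ j,
      Subgroup.map (MulAut.conj g).toMonoidHom (S i) = S j)
    (hdvd : ∀ i, p ∣ Nat.card (S i))
    (Q : Sylow p (interNormalizer S)) :
    Subgroup.centralizer
        (((Q : Subgroup (interNormalizer S)).map (interNormalizer S).subtype : Subgroup G) : Set G)
      ≤ interNormalizer S := by
  have : Fact p.Prime := ⟨hp⟩
  intro c hc
  refine Subgroup.mem_iInf.mpr fun i => ?_
  have hSM : S i ≤ interNormalizer S := le_iInf (hnorm i)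
  have : ((S i).subgroupOf (interNormalizer S)).Normal :=
    (Subgroup.normal_subgroupOf_iff_le_normalizer hSM).mpr (iInf_le _ i)
  have hdvdM : p ∣ Nat.card ((S i).subgroupOf (interNormalizer S)) := by
    rw [Nat.card_congr (Subgroup.subgroupOfEquivOfLe hSM).toEquiv]
    exact hdvd i
  obtain ⟨x, hxQ, hxS, hx1⟩ := Q.exists_ne_one_mem_of_normal hdvdM
  exact Subgroup.mem_normalizer_of_commute_of_disjoint_conj hdisj hperm hxS
    (mt OneMemClass.coe_eq_one.mp hx1) (hc _ (Subgroup.mem_map_of_mem _ hxQ)).symm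

/-- Let `G` be a finite group, `p` a prime, and `S₁, …, S_t` nontrivial
subgroups of `G` that pairwise intersect trivially, normalize each other, are permuted by
conjugation by `G`, and have order divisible by `p`. If `Q` is a Sylow `p`-subgroup of
`M = ⋂_j N_G(S_j)`, then `C_G(Q) ≤ M`. -/
theorem stmt9 {G : Type*} [Group G] [Finite G] (p : ℕ) (hp : p.Prime)
    (t : ℕ) (ht : 0 < t) (S : Fin t → Subgroup G)
    (hnontriv : ∀ i, S i ≠ ⊥)
    (hdisj : ∀ i j, i ≠ j → S i ⊓ S j = ⊥)
    (hnorm : ∀ i j, S i ≤ Subgroup.normalizer (S j : Set G))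
    (hperm : ∀ (g : G) (i : Fin t), ∃ j,
      Subgroup.map (MulAut.conj g).toMonoidHom (S i) = S j)
    (hdvd : ∀ i, p ∣ Nat.card (S i))
    (Q : Sylow p (interNormalizer S)) :
    Subgroup.centralizer
        (((Q : Subgroup (interNormalizer S)).map (interNormalizer S).subtype : Subgroup G) : Set G)
      ≤ interNormalizer S :=
  stmt9_general p hp t S hdisj hnorm hperm hdvd Q
end
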